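/- arXiv:1004.1947 — 5 statements merged into one kernel-verified Lean document; each statement's English description precedes it below -/
import Mathlib

section
/- Let E be a branch (a set of normal formulas) and α a sort. If E contains exactly n disequations between terms of type α, then there are at most 2^n α-discriminants. If E contains no disequation at α, the empty set is the unique α-discriminant. -/
/-- Simple types of STT: the type `o` of truth values is `base 0`, sorts are `base (α+1)`. -/
inductive Ty : Type
  | base : ℕ → Ty
  | arr : Ty → Ty → Ty
  deriving DecidableEq

abbrev Ty.o : Ty := Ty.base 0
abbrev Ty.sort (α : ℕ) : Ty := Ty.base (α + 1)

/-- Terms of STT: variables, negation, primitive equality at every type, application,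
lambda abstraction. -/
inductive Tm : Ty → Type
  | var : ℕ → (σ : Ty) → Tm σ
  | neg : Tm (Ty.arr Ty.o Ty.o)
  | eq : (σ : Ty) → Tm (Ty.arr σ (Ty.arr σ Ty.o))
  | app : ∀ {σ τ : Ty}, Tm (Ty.arr σ τ) → Tm σ → Tm τ
  | lam : ℕ → (σ : Ty) → ∀ {τ : Ty}, Tm τ → Tm (Ty.arr σ τ)

def Tm.Not (s : Tm Ty.o) : Tm Ty.o := Tm.app Tm.neg s
def Tm.Eqn {σ : Ty} (s t : Tm σ) : Tm Ty.o := Tm.app (Tm.app (Tm.eq σ) s) t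
def Tm.Diseq {σ : Ty} (s t : Tm σ) : Tm Ty.o := Tm.Not (Tm.Eqn s t)

/-- Argument lists (spines): `Args σ ρ` turns a head of type `σ` into a term of type `ρ`. -/
inductive Args : Ty → Ty → Type
  | nil : ∀ {ρ}, Args ρ ρ
  | cons : ∀ {σ τ ρ}, Tm σ → Args τ ρ → Args (Ty.arr σ τ) ρ

def applyArgs : ∀ {σ ρ : Ty}, Tm σ → Args σ ρ → Tm ρ
  | _, _, s, Args.nil => s
  | _, _, s, Args.cons t a => applyArgs (Tm.app s t) a

def nfArgs (f : (σ : Ty) → Tm σ → Tm σ) : ∀ {σ ρ : Ty}, Args σ ρ → Args σ ρ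
  | _, _, Args.nil => Args.nil
  | _, _, Args.cons t a => Args.cons (f _ t) (nfArgs f a)

/-- Pairs of equi-typed argument lists `s₁ … sₙ` and `t₁ … tₙ`. -/
inductive Args2 : Ty → Ty → Type
  | nil : ∀ {ρ}, Args2 ρ ρ
  | cons : ∀ {σ τ ρ}, Tm σ → Tm σ → Args2 τ ρ → Args2 (Ty.arr σ τ) ρ

def Args2.left : ∀ {σ ρ}, Args2 σ ρ → Args σ ρ
  | _, _, Args2.nil => Args.nil
  | _, _, Args2.cons s _ p => Args.cons s (Args2.left p)

def Args2.right : ∀ {σ ρ}, Args2 σ ρ → Args σ ρ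
  | _, _, Args2.nil => Args.nil
  | _, _, Args2.cons _ t p => Args.cons t (Args2.right p)

/-- The list of disequations `sᵢ ≠ tᵢ` of a pair of argument lists. -/
def Args2.diseqs : ∀ {σ ρ}, Args2 σ ρ → List (Tm Ty.o)
  | _, _, Args2.nil => []
  | _, _, Args2.cons s t p => Tm.Diseq s t :: Args2.diseqs p

/-- Atomic heads: names (variables and the logical constants). -/
inductive Atomic : ∀ {σ : Ty}, Tm σ → Prop
  | var : ∀ n σ, Atomic (Tm.var n σ)
  | neg : Atomic Tm.neg
  | eq : ∀ σ, Atomic (Tm.eq σ)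

/-- Update a substitution at the name `(x, σ0)`. -/
def updS (θ : ℕ → (σ : Ty) → Option (Tm σ)) (x : ℕ) (σ0 : Ty) (t : Tm σ0) :
    ℕ → (σ : Ty) → Option (Tm σ) := fun n σ =>
  if h : n = x ∧ σ = σ0 then some (h.2.symm ▸ t) else θ n σ

/-- A normalization operator with an accompanying substitution operation,
satisfying N1–N3 and S1–S4. -/
structure NormOp : Type where
  nf : ∀ {σ : Ty}, Tm σ → Tm σ
  sub : (ℕ → (σ : Ty) → Option (Tm σ)) → ∀ {σ : Ty}, Tm σ → Tm σ
  n1 : ∀ {σ : Ty} (s : Tm σ), nf (nf s) = nf s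
  n2 : ∀ {σ τ : Ty} (s : Tm (Ty.arr σ τ)) (t : Tm σ), nf (Tm.app (nf s) t) = nf (Tm.app s t)
  n3 : ∀ {σ : Ty} {β : ℕ} (h : Tm σ), Atomic h → ∀ a : Args σ (Ty.base β),
      nf (applyArgs h a) = applyArgs h (nfArgs (fun _ s => nf s) a)
  s1 : ∀ θ (n : ℕ) (σ : Ty), sub θ (Tm.var n σ) = (θ n σ).getD (Tm.var n σ)
  s1neg : ∀ θ, sub θ Tm.neg = Tm.neg
  s1eq : ∀ θ (σ : Ty), sub θ (Tm.eq σ) = Tm.eq σ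
  s2 : ∀ θ {σ τ : Ty} (s : Tm (Ty.arr σ τ)) (t : Tm σ),
      sub θ (Tm.app s t) = Tm.app (sub θ s) (sub θ t)
  s3 : ∀ θ (x : ℕ) (σ : Ty) {τ : Ty} (s : Tm τ) (t : Tm σ),
      nf (Tm.app (sub θ (Tm.lam x σ s)) t) = nf (sub (updS θ x σ t) s)
  s4 : ∀ {σ : Ty} (s : Tm σ), nf (sub (fun _ _ => none) s) = nf s

/-- The evidence conditions for a branch `E`. -/
structure Evident (Ω : NormOp) (E : Set (Tm Ty.o)) : Prop where
  dn : ∀ s : Tm Ty.o, Tm.Not (Tm.Not s) ∈ E → s ∈ E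
  bq : ∀ s t : Tm Ty.o, Tm.Eqn s t ∈ E → (s ∈ E ∧ t ∈ E) ∨ (Tm.Not s ∈ E ∧ Tm.Not t ∈ E)
  be : ∀ s t : Tm Ty.o, Tm.Diseq s t ∈ E → (s ∈ E ∧ Tm.Not t ∈ E) ∨ (Tm.Not s ∈ E ∧ t ∈ E)
  fq : ∀ {σ τ : Ty} (s t : Tm (Ty.arr σ τ)), Tm.Eqn s t ∈ E → ∀ u : Tm σ, Ω.nf u = u →
      Tm.Eqn (Ω.nf (Tm.app s u)) (Ω.nf (Tm.app t u)) ∈ E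
  fe : ∀ {σ τ : Ty} (s t : Tm (Ty.arr σ τ)), Tm.Diseq s t ∈ E →
      ∃ x : ℕ, Tm.Diseq (Ω.nf (Tm.app s (Tm.var x σ))) (Ω.nf (Tm.app t (Tm.var x σ))) ∈ E
  mat : ∀ {σ : Ty} (x : ℕ) (p : Args2 σ Ty.o),
      applyArgs (Tm.var x σ) p.left ∈ E → Tm.Not (applyArgs (Tm.var x σ) p.right) ∈ E →
      ∃ d ∈ p.diseqs, d ∈ E
  dec : ∀ {σ : Ty} {α : ℕ} (x : ℕ) (p : Args2 σ (Ty.sort α)),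
      Tm.Diseq (applyArgs (Tm.var x σ) p.left) (applyArgs (Tm.var x σ) p.right) ∈ E →
      ∃ d ∈ p.diseqs, d ∈ E
  con : ∀ {α : ℕ} (s t u v : Tm (Ty.sort α)), Tm.Eqn s t ∈ E → Tm.Diseq u v ∈ E →
      (Tm.Diseq s u ∈ E ∧ Tm.Diseq t u ∈ E) ∨ (Tm.Diseq s v ∈ E ∧ Tm.Diseq t v ∈ E)

/-- A term `u` is discriminating in `E` if it occurs on one side of a disequation in `E`. -/
def Discriminating (E : Set (Tm Ty.o)) {σ : Ty} (u : Tm σ) : Prop :=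
  ∃ t : Tm σ, Tm.Diseq u t ∈ E ∨ Tm.Diseq t u ∈ E

/-- An `α`-discriminant: a maximal set of `α`-discriminating terms no two of which are
related by a disequation in `E`. -/
def IsDiscriminant (E : Set (Tm Ty.o)) (α : ℕ) (a : Set (Tm (Ty.sort α))) : Prop :=
  (∀ u ∈ a, Discriminating E u) ∧
  (∀ s ∈ a, ∀ t ∈ a, Tm.Diseq s t ∉ E) ∧
  (∀ b : Set (Tm (Ty.sort α)), a ⊆ b → (∀ u ∈ b, Discriminating E u) →
    (∀ s ∈ b, ∀ t ∈ b, Tm.Diseq s t ∉ E) → b = a)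

/-- `s # t`: the disequation `s ≠ t` or `t ≠ s` belongs to `E`. -/
def hashE (E : Set (Tm Ty.o)) {σ : Ty} (s t : Tm σ) : Prop :=
  Tm.Diseq s t ∈ E ∨ Tm.Diseq t s ∈ E

/-- Compatibility of two terms relative to an evident branch, by induction on types. -/
def compat (Ω : NormOp) (E : Set (Tm Ty.o)) : (σ : Ty) → Tm σ → Tm σ → Prop
  | Ty.base 0 => fun s t =>
      ¬(Ω.nf s ∈ E ∧ Tm.Not (Ω.nf t) ∈ E) ∧ ¬(Tm.Not (Ω.nf s) ∈ E ∧ Ω.nf t ∈ E)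
  | Ty.base (α + 1) => fun s t => ¬ hashE E (Ω.nf s) (Ω.nf t)
  | Ty.arr σ τ => fun s t => ∀ u v : Tm σ, compat Ω E σ u v →
      compat Ω E τ (Tm.app s u) (Tm.app t v)

/-- `ExistsPairHashNf Ω E p` holds if `[sᵢ] # [tᵢ]` for some position `i` of `p`. -/
def ExistsPairHashNf (Ω : NormOp) (E : Set (Tm Ty.o)) : ∀ {σ ρ : Ty}, Args2 σ ρ → Prop
  | _, _, Args2.nil => False
  | _, _, Args2.cons s t p => hashE E (Ω.nf s) (Ω.nf t) ∨ ExistsPairHashNf Ω E p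

/-- The value system of an evident branch `E`: at `o` the values are booleans, at a sort the
values are `α`-discriminants, and at function types the logical-relation clause is used. -/
def sem (Ω : NormOp) (E : Set (Tm Ty.o)) : (σ : Ty) → (A : Type) × (Tm σ → A → Prop)
  | Ty.base 0 => ⟨Bool, fun s b => if b then Tm.Not (Ω.nf s) ∉ E else Ω.nf s ∉ E⟩
  | Ty.base (α + 1) => ⟨Set (Tm (Ty.sort α)), fun s a =>
      IsDiscriminant E α a ∧ (Discriminating E (Ω.nf s) → Ω.nf s ∈ a)⟩
  | Ty.arr σ τ =>
      ⟨{x : (sem Ω E σ).1 // ∃ t : Tm σ, (sem Ω E σ).2 t x} → (sem Ω E τ).1,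
       fun s f => ∀ (t : Tm σ) (x : (sem Ω E σ).1) (h : (sem Ω E σ).2 t x),
         (sem Ω E τ).2 (Tm.app s t) (f ⟨x, t, h⟩)⟩

/-- An applicative structure for STT: nonempty domains, `D(στ)` a set of functions
`D(σ) → D(τ)` (extensionality), `D(o) = {0,1}`, together with an assignment for the
variables and logical values for `¬` and `=_σ`. -/
structure Struc : Type 1 where
  D : Ty → Type
  ap : ∀ {σ τ : Ty}, D (Ty.arr σ τ) → D σ → D τ
  ext : ∀ {σ τ : Ty} (f g : D (Ty.arr σ τ)), (∀ a : D σ, ap f a = ap g a) → f = g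
  ne : ∀ σ : Ty, Nonempty (D σ)
  I : ℕ → ∀ σ : Ty, D σ
  bo : D Ty.o ≃ Bool
  negv : D (Ty.arr Ty.o Ty.o)
  eqv : ∀ σ : Ty, D (Ty.arr σ (Ty.arr σ Ty.o))
  hneg : ∀ b : D Ty.o, ap negv b = bo.symm (!(bo b))
  heq : ∀ {σ : Ty} (a b : D σ), ap (ap (eqv σ) a) b = bo.symm true ↔ a = b

/-- Update the assignment of a structure at the name `(m, σ0)`. -/
def updD (M : Struc) (I : ℕ → ∀ σ, M.D σ) (m : ℕ) (σ0 : Ty) (a : M.D σ0) :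
    ℕ → ∀ σ, M.D σ := fun n σ =>
  if h : n = m ∧ σ = σ0 then (h.2.symm ▸ a) else I n σ

/-- The evaluation relation of a logical structure. -/
inductive Eval (M : Struc) : (ℕ → ∀ σ, M.D σ) → ∀ σ : Ty, Tm σ → M.D σ → Prop
  | var : ∀ (I : ℕ → ∀ σ, M.D σ) (n : ℕ) (σ : Ty), Eval M I σ (Tm.var n σ) (I n σ)
  | neg : ∀ I : ℕ → ∀ σ, M.D σ, Eval M I (Ty.arr Ty.o Ty.o) Tm.neg M.negv
  | eq : ∀ (I : ℕ → ∀ σ, M.D σ) (σ : Ty), Eval M I (Ty.arr σ (Ty.arr σ Ty.o)) (Tm.eq σ) (M.eqv σ)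
  | app : ∀ {I : ℕ → ∀ σ, M.D σ} {σ τ : Ty} {s : Tm (Ty.arr σ τ)} {t : Tm σ}
      {f : M.D (Ty.arr σ τ)} {a : M.D σ},
      Eval M I (Ty.arr σ τ) s f → Eval M I σ t a → Eval M I τ (Tm.app s t) (M.ap f a)
  | lam : ∀ {I : ℕ → ∀ σ, M.D σ} (n : ℕ) (σ : Ty) {τ : Ty} (s : Tm τ) (f : M.D (Ty.arr σ τ)),
      (∀ a : M.D σ, Eval M (updD M I n σ a) τ s (M.ap f a)) →
      Eval M I (Ty.arr σ τ) (Tm.lam n σ s) f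

/-- A logical interpretation: a logical structure whose evaluation is total. -/
structure Interp : Type 1 extends Struc where
  total : ∀ (σ : Ty) (s : Tm σ), ∃ a : toStruc.D σ, Eval toStruc toStruc.I σ s a

/-- `M` is a model of the set of formulas `E`. -/
def Satisfies (M : Interp) (E : Set (Tm Ty.o)) : Prop :=
  ∀ s ∈ E, Eval M.toStruc M.I Ty.o s (M.bo.symm true)

/-- A surjective interpretation: every value is denoted by some term. -/
def Surj (M : Interp) : Prop :=
  ∀ (σ : Ty) (a : M.D σ), ∃ s : Tm σ, Eval M.toStruc M.I σ s a

/-- A complete branch: contains `s` or `¬s` for every normal formula `s`. -/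
def CompleteBranch (Ω : NormOp) (E : Set (Tm Ty.o)) : Prop :=
  ∀ s : Tm Ty.o, Ω.nf s = s → s ∈ E ∨ Tm.Not s ∈ E

/-- The abstract consistency conditions on a set of branches `Γ`. -/
structure ACC (Ω : NormOp) (Γ : Set (Set (Tm Ty.o))) : Prop where
  dn : ∀ A ∈ Γ, ∀ s : Tm Ty.o, Tm.Not (Tm.Not s) ∈ A → insert s A ∈ Γ
  bq : ∀ A ∈ Γ, ∀ s t : Tm Ty.o, Tm.Eqn s t ∈ A →
      insert s (insert t A) ∈ Γ ∨ insert (Tm.Not s) (insert (Tm.Not t) A) ∈ Γ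
  be : ∀ A ∈ Γ, ∀ s t : Tm Ty.o, Tm.Diseq s t ∈ A →
      insert s (insert (Tm.Not t) A) ∈ Γ ∨ insert (Tm.Not s) (insert t A) ∈ Γ
  fq : ∀ A ∈ Γ, ∀ {σ τ : Ty} (s t : Tm (Ty.arr σ τ)), Tm.Eqn s t ∈ A → ∀ u : Tm σ, Ω.nf u = u →
      insert (Tm.Eqn (Ω.nf (Tm.app s u)) (Ω.nf (Tm.app t u))) A ∈ Γ
  fe : ∀ A ∈ Γ, ∀ {σ τ : Ty} (s t : Tm (Ty.arr σ τ)), Tm.Diseq s t ∈ A →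
      ∃ x : ℕ, insert (Tm.Diseq (Ω.nf (Tm.app s (Tm.var x σ))) (Ω.nf (Tm.app t (Tm.var x σ)))) A ∈ Γ
  mat : ∀ A ∈ Γ, ∀ {σ : Ty} (x : ℕ) (p : Args2 σ Ty.o),
      applyArgs (Tm.var x σ) p.left ∈ A → Tm.Not (applyArgs (Tm.var x σ) p.right) ∈ A →
      ∃ d ∈ p.diseqs, insert d A ∈ Γ
  dec : ∀ A ∈ Γ, ∀ {σ : Ty} {α : ℕ} (x : ℕ) (p : Args2 σ (Ty.sort α)),
      Tm.Diseq (applyArgs (Tm.var x σ) p.left) (applyArgs (Tm.var x σ) p.right) ∈ A →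
      ∃ d ∈ p.diseqs, insert d A ∈ Γ
  con : ∀ A ∈ Γ, ∀ {α : ℕ} (s t u v : Tm (Ty.sort α)), Tm.Eqn s t ∈ A → Tm.Diseq u v ∈ A →
      insert (Tm.Diseq s u) (insert (Tm.Diseq t u) A) ∈ Γ ∨
      insert (Tm.Diseq s v) (insert (Tm.Diseq t v) A) ∈ Γ

/-- A complete abstract consistency class. -/
def CompleteACC (Ω : NormOp) (Γ : Set (Set (Tm Ty.o))) : Prop :=
  ∀ A ∈ Γ, ∀ s : Tm Ty.o, Ω.nf s = s → insert s A ∈ Γ ∨ insert (Tm.Not s) A ∈ Γ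

/-- Free occurrence of the name `(x, μ)` in a term. -/
def FreeIn (x : ℕ) (μ : Ty) : ∀ {σ : Ty}, Tm σ → Prop
  | _, Tm.var n σ => x = n ∧ μ = σ
  | _, Tm.app s t => FreeIn x μ s ∨ FreeIn x μ t
  | _, Tm.lam n σ s => ¬(x = n ∧ μ = σ) ∧ FreeIn x μ s
  | _, _ => False

/-- A closed branch: contains `x` and `¬x` for a variable `x : o`, or `x ≠ x` at a sort. -/
def ClosedB (A : Set (Tm Ty.o)) : Prop :=
  (∃ x : ℕ, Tm.var x Ty.o ∈ A ∧ Tm.Not (Tm.var x Ty.o) ∈ A) ∨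
  (∃ (α : ℕ) (x : ℕ), Tm.Diseq (Tm.var x (Ty.sort α)) (Tm.var x (Ty.sort α)) ∈ A)

/-- Refutability in the cut-free tableau calculus `T` for STT, with the restrictions that
rules are applied only to non-closed branches and functional extensionality is applied only
once per disequation. -/
inductive Refutable (Ω : NormOp) : Set (Tm Ty.o) → Prop
  | closed : ∀ {A : Set (Tm Ty.o)}, ClosedB A → Refutable Ω A
  | dn : ∀ {A : Set (Tm Ty.o)} {s : Tm Ty.o}, ¬ClosedB A → Tm.Not (Tm.Not s) ∈ A →
      Refutable Ω (insert s A) → Refutable Ω A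
  | bq : ∀ {A : Set (Tm Ty.o)} (s t : Tm Ty.o), ¬ClosedB A → Tm.Eqn s t ∈ A →
      Refutable Ω (insert s (insert t A)) →
      Refutable Ω (insert (Tm.Not s) (insert (Tm.Not t) A)) → Refutable Ω A
  | be : ∀ {A : Set (Tm Ty.o)} (s t : Tm Ty.o), ¬ClosedB A → Tm.Diseq s t ∈ A →
      Refutable Ω (insert s (insert (Tm.Not t) A)) →
      Refutable Ω (insert (Tm.Not s) (insert t A)) → Refutable Ω A
  | fq : ∀ {A : Set (Tm Ty.o)} {σ τ : Ty} (s t : Tm (Ty.arr σ τ)) (u : Tm σ), ¬ClosedB A →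
      Tm.Eqn s t ∈ A → Ω.nf u = u →
      Refutable Ω (insert (Tm.Eqn (Ω.nf (Tm.app s u)) (Ω.nf (Tm.app t u))) A) → Refutable Ω A
  | fe : ∀ {A : Set (Tm Ty.o)} {σ τ : Ty} (s t : Tm (Ty.arr σ τ)) (x : ℕ), ¬ClosedB A →
      Tm.Diseq s t ∈ A → (∀ u ∈ A, ¬ FreeIn x σ u) →
      (¬∃ y : ℕ, Tm.Diseq (Ω.nf (Tm.app s (Tm.var y σ))) (Ω.nf (Tm.app t (Tm.var y σ))) ∈ A) →
      Refutable Ω (insert (Tm.Diseq (Ω.nf (Tm.app s (Tm.var x σ))) (Ω.nf (Tm.app t (Tm.var x σ)))) A) →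
      Refutable Ω A
  | mat : ∀ {A : Set (Tm Ty.o)} {σ : Ty} (x : ℕ) (p : Args2 σ Ty.o), ¬ClosedB A →
      applyArgs (Tm.var x σ) p.left ∈ A → Tm.Not (applyArgs (Tm.var x σ) p.right) ∈ A →
      (∀ d ∈ p.diseqs, Refutable Ω (insert d A)) → Refutable Ω A
  | dec : ∀ {A : Set (Tm Ty.o)} {σ : Ty} {α : ℕ} (x : ℕ) (p : Args2 σ (Ty.sort α)), ¬ClosedB A →
      Tm.Diseq (applyArgs (Tm.var x σ) p.left) (applyArgs (Tm.var x σ) p.right) ∈ A →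
      (∀ d ∈ p.diseqs, Refutable Ω (insert d A)) → Refutable Ω A
  | con : ∀ {A : Set (Tm Ty.o)} {α : ℕ} (s t u v : Tm (Ty.sort α)), ¬ClosedB A →
      Tm.Eqn s t ∈ A → Tm.Diseq u v ∈ A →
      Refutable Ω (insert (Tm.Diseq s u) (insert (Tm.Diseq t u) A)) →
      Refutable Ω (insert (Tm.Diseq s v) (insert (Tm.Diseq t v) A)) → Refutable Ω A

/-!
A discriminant `a` is determined by the set of disequations `s ≠ t` in `E` with `s ∈ a`:
if two discriminants `a`, `b` agree on these, then `a ∪ b` is still a set of discriminating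
terms containing no disequation of `E`, so maximality gives `a = a ∪ b = b`. Hence
`a ↦ {(s, t) | s ≠ t ∈ E, s ∈ a}` embeds the discriminants into the subsets of the `n`
disequations. Without disequations no term is discriminating, and `∅` is the only discriminant.
-/

def diseqPairs (E : Set (Tm Ty.o)) (α : ℕ) : Set (Tm (Ty.sort α) × Tm (Ty.sort α)) :=
  {p | Tm.Diseq p.1 p.2 ∈ E}

namespace IsDiscriminant

variable {E : Set (Tm Ty.o)} {α : ℕ} {a b : Set (Tm (Ty.sort α))}

theorem eq_of_forall_diseq_mem_iff (ha : IsDiscriminant E α a) (hb : IsDiscriminant E α b)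
    (h : ∀ s t, Tm.Diseq s t ∈ E → (s ∈ a ↔ s ∈ b)) : a = b := by
  have hdisc : ∀ u ∈ a ∪ b, Discriminating E u := by
    rintro u (hu | hu)
    exacts [ha.1 u hu, hb.1 u hu]
  have hfree : ∀ s ∈ a ∪ b, ∀ t ∈ a ∪ b, Tm.Diseq s t ∉ E := by
    rintro s (hs | hs) t (ht | ht) hst
    · exact ha.2.1 s hs t ht hst
    · exact hb.2.1 s ((h s t hst).1 hs) t ht hst
    · exact ha.2.1 s ((h s t hst).2 hs) t ht hst
    · exact hb.2.1 s hs t ht hst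
  calc a = a ∪ b := (ha.2.2 _ Set.subset_union_left hdisc hfree).symm
    _ = b := hb.2.2 _ Set.subset_union_right hdisc hfree

theorem injOn_inter_preimage_fst :
    Set.InjOn (fun a => diseqPairs E α ∩ Prod.fst ⁻¹' a) {a | IsDiscriminant E α a} := by
  intro a ha b hb hab
  refine eq_of_forall_diseq_mem_iff ha hb fun s t hst => ?_
  have := congrArg (((s, t) : Tm (Ty.sort α) × Tm (Ty.sort α)) ∈ ·) hab
  simpa [diseqPairs, hst] using this

theorem finite_and_ncard_le (hD : (diseqPairs E α).Finite) :
    {a | IsDiscriminant E α a}.Finite ∧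
      {a | IsDiscriminant E α a}.ncard ≤ 2 ^ (diseqPairs E α).ncard := by
  have hmaps : Set.MapsTo (fun a => diseqPairs E α ∩ Prod.fst ⁻¹' a)
      {a | IsDiscriminant E α a} (𝒫 diseqPairs E α) :=
    fun _ _ => Set.inter_subset_left
  refine ⟨hD.powerset.of_injOn hmaps injOn_inter_preimage_fst, ?_⟩
  calc {a | IsDiscriminant E α a}.ncard
      ≤ (𝒫 diseqPairs E α).ncard :=
        Set.ncard_le_ncard_of_injOn _ hmaps injOn_inter_preimage_fst hD.powerset
    _ = 2 ^ (diseqPairs E α).ncard := Set.ncard_powerset _ hD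

theorem setOf_eq_singleton_empty (hE : ∀ s t : Tm (Ty.sort α), Tm.Diseq s t ∉ E) :
    {a | IsDiscriminant E α a} = {∅} := by
  have hnot : ∀ u : Tm (Ty.sort α), ¬Discriminating E u := by
    rintro u ⟨t, ht | ht⟩
    exacts [hE u t ht, hE t u ht]
  have hempty : ∀ c : Set (Tm (Ty.sort α)), (∀ u ∈ c, Discriminating E u) → c = ∅ :=
    fun c hc => Set.eq_empty_of_forall_notMem fun u hu => hnot u (hc u hu)
  ext a
  refine ⟨fun ha => hempty a ha.1, ?_⟩
  rintro rfl
  exact ⟨by simp, by simp, fun c _ hc _ => hempty c hc⟩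

end IsDiscriminant

theorem stmt5_general (E : Set (Tm Ty.o))
    (α : ℕ) (n : ℕ) :
    ((Set.Finite {p : Tm (Ty.sort α) × Tm (Ty.sort α) | Tm.Diseq p.1 p.2 ∈ E} ∧
      Set.ncard {p : Tm (Ty.sort α) × Tm (Ty.sort α) | Tm.Diseq p.1 p.2 ∈ E} = n) →
      Set.Finite {a : Set (Tm (Ty.sort α)) | IsDiscriminant E α a} ∧
      Set.ncard {a : Set (Tm (Ty.sort α)) | IsDiscriminant E α a} ≤ 2 ^ n) ∧
    ((∀ s t : Tm (Ty.sort α), Tm.Diseq s t ∉ E) →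
      {a : Set (Tm (Ty.sort α)) | IsDiscriminant E α a} = {∅}) := by
  refine ⟨?_, IsDiscriminant.setOf_eq_singleton_empty⟩
  rintro ⟨hD, rfl⟩
  exact IsDiscriminant.finite_and_ncard_le hD

/-- If `E` contains exactly `n` disequations at the sort `α`, then there are at
most `2^n` `α`-discriminants; if it contains none, `∅` is the unique `α`-discriminant. -/
theorem stmt5 (Ω : NormOp) (E : Set (Tm Ty.o)) (hnorm : ∀ s ∈ E, Ω.nf s = s)
    (α : ℕ) (n : ℕ) :
    ((Set.Finite {p : Tm (Ty.sort α) × Tm (Ty.sort α) | Tm.Diseq p.1 p.2 ∈ E} ∧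
      Set.ncard {p : Tm (Ty.sort α) × Tm (Ty.sort α) | Tm.Diseq p.1 p.2 ∈ E} = n) →
      Set.Finite {a : Set (Tm (Ty.sort α)) | IsDiscriminant E α a} ∧
      Set.ncard {a : Set (Tm (Ty.sort α)) | IsDiscriminant E α a} ≤ 2 ^ n) ∧
    ((∀ s t : Tm (Ty.sort α), Tm.Diseq s t ∉ E) →
      {a : Set (Tm (Ty.sort α)) | IsDiscriminant E α a} = {∅}) :=
  stmt5_general E α n
end

section
/- Let E be an evident branch and let a, b be distinct α-discriminants. Then (1) there exist s ∈ a and t ∈ b with s ≠ t or t ≠ s in E, and (2) there are no s ∈ a, t ∈ b such that the equation s =_α t is in E. -/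
theorem diseq_not_mem_union {E : Set (Tm Ty.o)} {σ : Ty} {a b : Set (Tm σ)}
    (ha : ∀ s ∈ a, ∀ t ∈ a, Tm.Diseq s t ∉ E) (hb : ∀ s ∈ b, ∀ t ∈ b, Tm.Diseq s t ∉ E)
    (hab : ∀ s ∈ a, ∀ t ∈ b, ¬ hashE E s t) :
    ∀ s ∈ a ∪ b, ∀ t ∈ a ∪ b, Tm.Diseq s t ∉ E := by
  rintro s (hs | hs) t (ht | ht) hst
  · exact ha s hs t ht hst
  · exact hab s hs t ht (Or.inl hst)
  · exact hab t ht s hs (Or.inr hst)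
  · exact hb s hs t ht hst

/-- By maximality, two discriminants with no disequation between them both equal their union. -/
theorem IsDiscriminant.exists_hashE_of_ne {E : Set (Tm Ty.o)} {α : ℕ}
    {a b : Set (Tm (Ty.sort α))} (ha : IsDiscriminant E α a) (hb : IsDiscriminant E α b)
    (hab : a ≠ b) : ∃ s ∈ a, ∃ t ∈ b, hashE E s t := by
  by_contra! hsep
  have hdisc : ∀ u ∈ a ∪ b, Discriminating E u := by
    rintro u (hu | hu)
    exacts [ha.1 u hu, hb.1 u hu]
  have hfree := diseq_not_mem_union ha.2.1 hb.2.1 hsep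
  have hua : a ∪ b = a := ha.2.2 _ Set.subset_union_left hdisc hfree
  have hub : a ∪ b = b := hb.2.2 _ Set.subset_union_right hdisc hfree
  exact hab (hua.symm.trans hub)

theorem Evident.diseq_left_or_diseq_right {Ω : NormOp} {E : Set (Tm Ty.o)} (hE : Evident Ω E)
    {α : ℕ} {s t u v : Tm (Ty.sort α)} (hst : Tm.Eqn s t ∈ E) (huv : hashE E u v) :
    Tm.Diseq s u ∈ E ∨ Tm.Diseq t v ∈ E := by
  rcases huv with huv | hvu
  · rcases hE.con s t u v hst huv with ⟨hsu, -⟩ | ⟨-, htv⟩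
    exacts [Or.inl hsu, Or.inr htv]
  · rcases hE.con s t v u hst hvu with ⟨-, htv⟩ | ⟨hsu, -⟩
    exacts [Or.inr htv, Or.inl hsu]

theorem stmt6_general (Ω : NormOp) (E : Set (Tm Ty.o)) (hE : Evident Ω E)
    (α : ℕ) (a b : Set (Tm (Ty.sort α)))
    (ha : IsDiscriminant E α a) (hb : IsDiscriminant E α b) (hab : a ≠ b) :
    (∃ s ∈ a, ∃ t ∈ b, hashE E s t) ∧ ¬ ∃ s ∈ a, ∃ t ∈ b, Tm.Eqn s t ∈ E := by
  obtain ⟨u, hu, v, hv, huv⟩ := ha.exists_hashE_of_ne hb hab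
  refine ⟨⟨u, hu, v, hv, huv⟩, ?_⟩
  rintro ⟨s, hs, t, ht, hst⟩
  rcases hE.diseq_left_or_diseq_right hst huv with hsu | htv
  exacts [ha.2.1 s hs u hu hsu, hb.2.1 t ht v hv htv]

/-- Distinct `α`-discriminants of an evident branch are separated by a
disequation in `E` and are not connected by an equation in `E`. -/
theorem stmt6 (Ω : NormOp) (E : Set (Tm Ty.o)) (hE : Evident Ω E)
    (hnorm : ∀ s ∈ E, Ω.nf s = s) (α : ℕ) (a b : Set (Tm (Ty.sort α)))
    (ha : IsDiscriminant E α a) (hb : IsDiscriminant E α b) (hab : a ≠ b) :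
    (∃ s ∈ a, ∃ t ∈ b, hashE E s t) ∧ ¬ ∃ s ∈ a, ∃ t ∈ b, Tm.Eqn s t ∈ E :=
  stmt6_general Ω E hE α a b ha hb hab
end

section
/- Let E be an evident branch. For all types σ: (1) no two terms s, t of type σ are both compatible (s ∼_σ t) and have [s] # [t]; and (2) for any variable x and equi-typed argument lists, either x s₁…sₙ ∼_σ x t₁…tₙ or [sᵢ] # [tᵢ] for some i. -/
/-!
The two parts are proved together by induction on `σ`. At `o` and at sorts, part (1) is the
evidence condition BE (respectively the definition of `∼`), and part (2) is Mat (respectively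
Dec) applied to the normal forms of `x s₁…sₙ` and `x t₁…tₙ`, which N3 computes argumentwise.
At `σ → τ`, part (2) at `σ` with no arguments makes every variable `y : σ` compatible with
itself, so FE reduces part (1) to type `τ`; and part (2) for `x s̄` applied to `u ∼ v` is
part (2) at `τ` for the lists extended by `u` and `v`, whose extra position cannot carry
`[u] # [v]` by part (1) at `σ`.
-/

def Args2.map (f : (σ : Ty) → Tm σ → Tm σ) : ∀ {σ ρ : Ty}, Args2 σ ρ → Args2 σ ρ
  | _, _, Args2.nil => Args2.nil
  | _, _, Args2.cons s t p => Args2.cons (f _ s) (f _ t) (p.map f)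

def Args2.swap : ∀ {σ ρ : Ty}, Args2 σ ρ → Args2 σ ρ
  | _, _, Args2.nil => Args2.nil
  | _, _, Args2.cons s t p => Args2.cons t s p.swap

def Args2.snoc : ∀ {σ μ ρ : Ty}, Args2 σ (Ty.arr μ ρ) → Tm μ → Tm μ → Args2 σ ρ
  | _, _, _, Args2.nil, u, v => Args2.cons u v Args2.nil
  | _, _, _, Args2.cons s t p, u, v => Args2.cons s t (p.snoc u v)

namespace Args2

theorem map_left (f : (σ : Ty) → Tm σ → Tm σ) :
    ∀ {σ ρ : Ty} (p : Args2 σ ρ), (p.map f).left = nfArgs f p.left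
  | _, _, nil => rfl
  | _, _, cons _ _ p => by rw [map, left, left, map_left f p, nfArgs]

theorem map_right (f : (σ : Ty) → Tm σ → Tm σ) :
    ∀ {σ ρ : Ty} (p : Args2 σ ρ), (p.map f).right = nfArgs f p.right
  | _, _, nil => rfl
  | _, _, cons _ _ p => by rw [map, right, right, map_right f p, nfArgs]

theorem swap_left : ∀ {σ ρ : Ty} (p : Args2 σ ρ), p.swap.left = p.right
  | _, _, nil => rfl
  | _, _, cons _ _ p => by rw [swap, left, right, swap_left p]

theorem swap_right : ∀ {σ ρ : Ty} (p : Args2 σ ρ), p.swap.right = p.left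
  | _, _, nil => rfl
  | _, _, cons _ _ p => by rw [swap, left, right, swap_right p]

theorem applyArgs_snoc_left :
    ∀ {σ μ ρ : Ty} (p : Args2 σ (Ty.arr μ ρ)) (u v : Tm μ) (h : Tm σ),
      applyArgs h (p.snoc u v).left = Tm.app (applyArgs h p.left) u
  | _, _, _, nil, _, _, _ => rfl
  | _, _, _, cons s _ p, u, v, h => applyArgs_snoc_left p u v (Tm.app h s)

theorem applyArgs_snoc_right :
    ∀ {σ μ ρ : Ty} (p : Args2 σ (Ty.arr μ ρ)) (u v : Tm μ) (h : Tm σ),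
      applyArgs h (p.snoc u v).right = Tm.app (applyArgs h p.right) v
  | _, _, _, nil, _, _, _ => rfl
  | _, _, _, cons _ t p, u, v, h => applyArgs_snoc_right p u v (Tm.app h t)

end Args2

section Compatibility

variable {Ω : NormOp} {E : Set (Tm Ty.o)}

theorem hashE_comm {σ : Ty} (s t : Tm σ) : hashE E s t ↔ hashE E t s := Or.comm

theorem existsPairHashNf_swap {σ ρ : Ty} :
    ∀ p : Args2 σ ρ, ExistsPairHashNf Ω E p.swap ↔ ExistsPairHashNf Ω E p
  | Args2.nil => Iff.rfl
  | Args2.cons _ _ p => by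
    rw [Args2.swap, ExistsPairHashNf, ExistsPairHashNf, existsPairHashNf_swap p, hashE_comm]

theorem existsPairHashNf_snoc :
    ∀ {σ μ ρ : Ty} (p : Args2 σ (Ty.arr μ ρ)) (u v : Tm μ),
      ExistsPairHashNf Ω E (p.snoc u v) ↔ ExistsPairHashNf Ω E p ∨ hashE E (Ω.nf u) (Ω.nf v)
  | _, _, _, Args2.nil, _, _ => by simp only [Args2.snoc, ExistsPairHashNf, or_false, false_or]
  | _, _, _, Args2.cons _ _ p, u, v => by
    rw [Args2.snoc, ExistsPairHashNf, ExistsPairHashNf, existsPairHashNf_snoc p, or_assoc]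

theorem existsPairHashNf_of_exists_mem_diseqs {σ ρ : Ty} :
    ∀ p : Args2 σ ρ, (∃ d ∈ (p.map fun _ s => Ω.nf s).diseqs, d ∈ E) → ExistsPairHashNf Ω E p
  | Args2.nil, ⟨_, hd, _⟩ => nomatch hd
  | Args2.cons _ _ p, ⟨d, hd, hdE⟩ => by
    rcases List.mem_cons.1 hd with rfl | hd
    · exact Or.inl (Or.inl hdE)
    · exact Or.inr (existsPairHashNf_of_exists_mem_diseqs p ⟨d, hd, hdE⟩)

theorem nf_applyArgs_var_left {τ : Ty} {β : ℕ} (x : ℕ) (p : Args2 τ (Ty.base β)) :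
    Ω.nf (applyArgs (Tm.var x τ) p.left) =
      applyArgs (Tm.var x τ) (p.map fun _ s => Ω.nf s).left := by
  rw [Args2.map_left, Ω.n3 _ (Atomic.var x τ)]

theorem nf_applyArgs_var_right {τ : Ty} {β : ℕ} (x : ℕ) (p : Args2 τ (Ty.base β)) :
    Ω.nf (applyArgs (Tm.var x τ) p.right) =
      applyArgs (Tm.var x τ) (p.map fun _ s => Ω.nf s).right := by
  rw [Args2.map_right, Ω.n3 _ (Atomic.var x τ)]

theorem existsPairHashNf_of_mem_of_not_mem (hE : Evident Ω E) {τ : Ty} (x : ℕ)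
    (p : Args2 τ Ty.o) (hs : Ω.nf (applyArgs (Tm.var x τ) p.left) ∈ E)
    (ht : Tm.Not (Ω.nf (applyArgs (Tm.var x τ) p.right)) ∈ E) : ExistsPairHashNf Ω E p := by
  rw [nf_applyArgs_var_left] at hs
  rw [nf_applyArgs_var_right] at ht
  exact existsPairHashNf_of_exists_mem_diseqs p (hE.mat x _ hs ht)

theorem existsPairHashNf_of_diseq (hE : Evident Ω E) {τ : Ty} {α : ℕ} (x : ℕ)
    (p : Args2 τ (Ty.sort α))
    (h : Tm.Diseq (Ω.nf (applyArgs (Tm.var x τ) p.left))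
      (Ω.nf (applyArgs (Tm.var x τ) p.right)) ∈ E) : ExistsPairHashNf Ω E p := by
  rw [nf_applyArgs_var_left, nf_applyArgs_var_right] at h
  exact existsPairHashNf_of_exists_mem_diseqs p (hE.dec x _ h)

theorem exists_hashE_nf_app_var (hE : Evident Ω E) {σ τ : Ty} {s t : Tm (Ty.arr σ τ)}
    (h : hashE E (Ω.nf s) (Ω.nf t)) :
    ∃ y : ℕ, hashE E (Ω.nf (Tm.app s (Tm.var y σ))) (Ω.nf (Tm.app t (Tm.var y σ))) := by
  rcases h with h | h
  · obtain ⟨y, hy⟩ := hE.fe _ _ h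
    rw [Ω.n2, Ω.n2] at hy
    exact ⟨y, Or.inl hy⟩
  · obtain ⟨y, hy⟩ := hE.fe _ _ h
    rw [Ω.n2, Ω.n2] at hy
    exact ⟨y, Or.inr hy⟩

theorem not_compat_and_hashE_o (hE : Evident Ω E) (s t : Tm Ty.o) :
    ¬(compat Ω E Ty.o s t ∧ hashE E (Ω.nf s) (Ω.nf t)) := by
  rintro ⟨⟨hst, hts⟩, h | h⟩
  · rcases hE.be _ _ h with hs | hs
    · exact hst hs
    · exact hts hs
  · rcases hE.be _ _ h with ht | ht
    · exact hts ht.symm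
    · exact hst ht.symm

theorem not_compat_and_hashE_arr (hE : Evident Ω E) {σ τ : Ty}
    (hvar : ∀ y : ℕ, compat Ω E σ (Tm.var y σ) (Tm.var y σ))
    (ih : ∀ s t : Tm τ, ¬(compat Ω E τ s t ∧ hashE E (Ω.nf s) (Ω.nf t)))
    (s t : Tm (Ty.arr σ τ)) : ¬(compat Ω E (Ty.arr σ τ) s t ∧ hashE E (Ω.nf s) (Ω.nf t)) := by
  rintro ⟨hc, h⟩
  obtain ⟨y, hy⟩ := exists_hashE_nf_app_var hE h
  exact ih _ _ ⟨hc _ _ (hvar y), hy⟩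

theorem compat_applyArgs_var_o (hE : Evident Ω E) {τ : Ty} (x : ℕ) (p : Args2 τ Ty.o) :
    compat Ω E Ty.o (applyArgs (Tm.var x τ) p.left) (applyArgs (Tm.var x τ) p.right) ∨
      ExistsPairHashNf Ω E p := by
  refine or_iff_not_imp_right.2 fun hp => ⟨fun ⟨hs, ht⟩ => ?_, fun ⟨hs, ht⟩ => ?_⟩
  · exact hp (existsPairHashNf_of_mem_of_not_mem hE x p hs ht)
  · rw [← Args2.swap_right p] at hs
    rw [← Args2.swap_left p] at ht
    exact hp ((existsPairHashNf_swap p).1 (existsPairHashNf_of_mem_of_not_mem hE x _ ht hs))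

theorem compat_applyArgs_var_sort (hE : Evident Ω E) {τ : Ty} {α : ℕ} (x : ℕ)
    (p : Args2 τ (Ty.sort α)) :
    compat Ω E (Ty.sort α) (applyArgs (Tm.var x τ) p.left) (applyArgs (Tm.var x τ) p.right) ∨
      ExistsPairHashNf Ω E p := by
  refine or_iff_not_imp_right.2 fun hp h => ?_
  rcases h with h | h
  · exact hp (existsPairHashNf_of_diseq hE x p h)
  · rw [← Args2.swap_left p, ← Args2.swap_right p] at h
    exact hp ((existsPairHashNf_swap p).1 (existsPairHashNf_of_diseq hE x _ h))

theorem compat_applyArgs_var_arr {σ τ ρ : Ty} (x : ℕ)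
    (ihσ : ∀ u v : Tm σ, ¬(compat Ω E σ u v ∧ hashE E (Ω.nf u) (Ω.nf v)))
    (ihτ : ∀ p : Args2 ρ τ,
      compat Ω E τ (applyArgs (Tm.var x ρ) p.left) (applyArgs (Tm.var x ρ) p.right) ∨
        ExistsPairHashNf Ω E p)
    (p : Args2 ρ (Ty.arr σ τ)) :
    compat Ω E (Ty.arr σ τ) (applyArgs (Tm.var x ρ) p.left) (applyArgs (Tm.var x ρ) p.right) ∨
      ExistsPairHashNf Ω E p := by
  refine or_iff_not_imp_right.2 fun hp u v huv => ?_
  have h := ihτ (p.snoc u v)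
  rw [Args2.applyArgs_snoc_left, Args2.applyArgs_snoc_right, existsPairHashNf_snoc] at h
  exact h.resolve_right (not_or.2 ⟨hp, fun huv' => ihσ u v ⟨huv, huv'⟩⟩)

end Compatibility

theorem stmt7_general (Ω : NormOp) (E : Set (Tm Ty.o)) (hE : Evident Ω E)
    (σ : Ty) :
    (∀ s t : Tm σ, ¬(compat Ω E σ s t ∧ hashE E (Ω.nf s) (Ω.nf t))) ∧
    (∀ (τ : Ty) (x : ℕ) (p : Args2 τ σ),
      compat Ω E σ (applyArgs (Tm.var x τ) p.left) (applyArgs (Tm.var x τ) p.right) ∨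
      ExistsPairHashNf Ω E p) := by
  induction σ with
  | base n =>
    cases n with
    | zero => exact ⟨not_compat_and_hashE_o hE, fun _ x => compat_applyArgs_var_o hE x⟩
    | succ α => exact ⟨fun _ _ h => h.1 h.2, fun _ x => compat_applyArgs_var_sort hE x⟩
  | arr σ τ ihσ ihτ =>
    have hvar (y : ℕ) : compat Ω E σ (Tm.var y σ) (Tm.var y σ) :=
      (ihσ.2 σ y Args2.nil).resolve_right id
    exact ⟨not_compat_and_hashE_arr hE hvar ihτ.1,
      fun ρ x => compat_applyArgs_var_arr x ihσ.1 (ihτ.2 ρ x)⟩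

/-- Compatibility Lemma: for every type `σ`, (1) no two terms of type `σ` are
both compatible and have `[s] # [t]`; (2) for any variable and equi-typed argument lists,
either the applications are compatible or `[sᵢ] # [tᵢ]` for some `i`. -/
theorem stmt7 (Ω : NormOp) (E : Set (Tm Ty.o)) (hE : Evident Ω E)
    (hnorm : ∀ s ∈ E, Ω.nf s = s) (σ : Ty) :
    (∀ s t : Tm σ, ¬(compat Ω E σ s t ∧ hashE E (Ω.nf s) (Ω.nf t))) ∧
    (∀ (τ : Ty) (x : ℕ) (p : Args2 τ σ),
      compat Ω E σ (applyArgs (Tm.var x τ) p.left) (applyArgs (Tm.var x τ) p.right) ∨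
      ExistsPairHashNf Ω E p) :=
  stmt7_general Ω E hE σ
end

section
/- Let E be an evident branch with its value system ≈. For every variable x:σ there exists a ∈ D(σ) with x ≈ a; in particular D(σ) is nonempty for every type σ. -/
/-!
By simultaneous induction on `σ` one proves the paper's two lemmas.
*Compatibility*: if `s ≈ a` and `t ≈ a` then `[s] ≠ [t]` is not in `E`.
*Common value*: a set of terms that pairwise have the shape `x s₁ … sₙ`, `x t₁ … tₙ` with no
`[sᵢ] ≠ [tᵢ]` in `E` has a common value; a single variable is such a set.
At `o` and at sorts the mating and decomposition conditions make the obvious candidate (a truth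
value, resp. a maximal discriminant containing the discriminating normal forms) work. At `μ → ν`,
functional extensionality reduces compatibility to `ν` at a variable, which has a value by the
common value lemma at `μ`; and a common value of a family is the function that picks, for each
value `y` at `μ`, a common value of all applications `s t` with `t ≈ y`, which are pairwise of
the required shape by compatibility at `μ`.
-/

theorem isOfFiniteCharacter_setOf_forall_mem_rel {α : Type*} (R : α → α → Prop) :
    Order.IsOfFiniteCharacter {b : Set α | ∀ s ∈ b, ∀ t ∈ b, R s t} := by
  intro b
  refine ⟨fun hb c hcb _ s hs t ht => hb s (hcb hs) t (hcb ht), fun hb s hs t ht => ?_⟩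
  exact hb {s, t} (Set.insert_subset hs (Set.singleton_subset_iff.2 ht)) (Set.toFinite _)
    s (Set.mem_insert s _) t (Set.mem_insert_of_mem s rfl)

theorem exists_isDiscriminant_superset (E : Set (Tm Ty.o)) (α : ℕ) {a₀ : Set (Tm (Ty.sort α))}
    (hdisc : ∀ u ∈ a₀, Discriminating E u) (hapart : ∀ s ∈ a₀, ∀ t ∈ a₀, Tm.Diseq s t ∉ E) :
    ∃ a, IsDiscriminant E α a ∧ a₀ ⊆ a := by
  obtain ⟨a, ha₀, hmax⟩ := (isOfFiniteCharacter_setOf_forall_mem_rel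
    fun s t => Discriminating E s ∧ Tm.Diseq s t ∉ E).exists_maximal (x := a₀)
    fun s hs t ht => ⟨hdisc s hs, hapart s hs t ht⟩
  refine ⟨a, ⟨fun u hu => (hmax.prop u hu u hu).1, fun s hs t ht => (hmax.prop s hs t ht).2,
    fun b hab hbdisc hbapart => ?_⟩, ha₀⟩
  exact (hmax.eq_of_subset (fun s hs t ht => ⟨hbdisc s hs, hbapart s hs t ht⟩) hab).symm

def Args2.normalize (Ω : NormOp) : ∀ {σ ρ : Ty}, Args2 σ ρ → Args2 σ ρ
  | _, _, Args2.nil => Args2.nil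
  | _, _, Args2.cons s t p => Args2.cons (Ω.nf s) (Ω.nf t) (p.normalize Ω)

theorem Args2.normalize_left (Ω : NormOp) : ∀ {σ ρ : Ty} (r : Args2 σ ρ),
    (r.normalize Ω).left = nfArgs (fun _ s => Ω.nf s) r.left
  | _, _, Args2.nil => rfl
  | _, _, Args2.cons _ _ p => congrArg (Args.cons _) (p.normalize_left Ω)

theorem Args2.normalize_right (Ω : NormOp) : ∀ {σ ρ : Ty} (r : Args2 σ ρ),
    (r.normalize Ω).right = nfArgs (fun _ s => Ω.nf s) r.right
  | _, _, Args2.nil => rfl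
  | _, _, Args2.cons _ _ p => congrArg (Args.cons _) (p.normalize_right Ω)

/-- `x s₁ … sₙ` and `x t₁ … tₙ` with no `[sᵢ] ≠ [tᵢ]` in `E`: the pairs about which the mating
and decomposition conditions of an evident branch speak. -/
inductive SpineCompat (Ω : NormOp) (E : Set (Tm Ty.o)) : ∀ {σ : Ty}, Tm σ → Tm σ → Prop
  | var (x : ℕ) (σ : Ty) : SpineCompat Ω E (Tm.var x σ) (Tm.var x σ)
  | app {σ τ : Ty} {s s' : Tm (Ty.arr σ τ)} {t t' : Tm σ} :
      SpineCompat Ω E s s' → Tm.Diseq (Ω.nf t) (Ω.nf t') ∉ E →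
      SpineCompat Ω E (Tm.app s t) (Tm.app s' t')

namespace SpineCompat

variable {Ω : NormOp} {E : Set (Tm Ty.o)}

theorem exists_args2 {τ : Ty} {s t : Tm τ} (h : SpineCompat Ω E s t) {β : ℕ}
    (r : Args2 τ (Ty.base β)) (hr : ∀ d ∈ (r.normalize Ω).diseqs, d ∉ E) :
    ∃ (x : ℕ) (σ : Ty) (p : Args2 σ (Ty.base β)),
      Ω.nf (applyArgs s r.left) = applyArgs (Tm.var x σ) p.left ∧
      Ω.nf (applyArgs t r.right) = applyArgs (Tm.var x σ) p.right ∧ ∀ d ∈ p.diseqs, d ∉ E := by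
  induction h with
  | var x σ =>
    exact ⟨x, σ, r.normalize Ω, by rw [Ω.n3 _ (Atomic.var x σ), Args2.normalize_left],
      by rw [Ω.n3 _ (Atomic.var x σ), Args2.normalize_right], hr⟩
  | @app _ _ _ _ t t' _ ht ih =>
    refine ih (Args2.cons t t' r) ?_
    simp only [Args2.normalize, Args2.diseqs, List.mem_cons, forall_eq_or_imp]
    exact ⟨ht, hr⟩

theorem exists_args2_of_base {β : ℕ} {s t : Tm (Ty.base β)} (h : SpineCompat Ω E s t) :
    ∃ (x : ℕ) (σ : Ty) (p : Args2 σ (Ty.base β)),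
      Ω.nf s = applyArgs (Tm.var x σ) p.left ∧
      Ω.nf t = applyArgs (Tm.var x σ) p.right ∧ ∀ d ∈ p.diseqs, d ∉ E :=
  h.exists_args2 Args2.nil (by simp [Args2.normalize, Args2.diseqs])

theorem not_mem_neg_of_mem (hE : Evident Ω E) {s t : Tm Ty.o} (h : SpineCompat Ω E s t)
    (hs : Ω.nf s ∈ E) : Tm.Not (Ω.nf t) ∉ E := by
  obtain ⟨x, σ, p, hs_eq, ht_eq, hp⟩ := h.exists_args2_of_base
  intro ht
  rw [hs_eq] at hs
  rw [ht_eq] at ht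
  obtain ⟨d, hd, hdE⟩ := hE.mat x p hs ht
  exact hp d hd hdE

theorem diseq_not_mem (hE : Evident Ω E) {α : ℕ} {s t : Tm (Ty.sort α)}
    (h : SpineCompat Ω E s t) : Tm.Diseq (Ω.nf s) (Ω.nf t) ∉ E := by
  obtain ⟨x, σ, p, hs, ht, hp⟩ := h.exists_args2_of_base
  intro hst
  rw [hs, ht] at hst
  obtain ⟨d, hd, hdE⟩ := hE.dec x p hst
  exact hp d hd hdE

end SpineCompat

def CompatibilityAt (Ω : NormOp) (E : Set (Tm Ty.o)) (σ : Ty) : Prop :=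
  ∀ (a : (sem Ω E σ).1) (s t : Tm σ), (sem Ω E σ).2 s a → (sem Ω E σ).2 t a →
    Tm.Diseq (Ω.nf s) (Ω.nf t) ∉ E

def CommonValueAt (Ω : NormOp) (E : Set (Tm Ty.o)) (σ : Ty) : Prop :=
  ∀ S : Set (Tm σ), (∀ s ∈ S, ∀ t ∈ S, SpineCompat Ω E s t) →
    ∃ a : (sem Ω E σ).1, ∀ s ∈ S, (sem Ω E σ).2 s a

section ValueSystem

variable {Ω : NormOp} {E : Set (Tm Ty.o)}

theorem CommonValueAt.exists_var {σ : Ty} (h : CommonValueAt Ω E σ) (x : ℕ) :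
    ∃ a : (sem Ω E σ).1, (sem Ω E σ).2 (Tm.var x σ) a := by
  obtain ⟨a, ha⟩ := h {Tm.var x σ} (by rintro s rfl t rfl; exact .var x σ)
  exact ⟨a, ha _ rfl⟩

theorem compatibilityAt_o (hE : Evident Ω E) : CompatibilityAt Ω E Ty.o := by
  intro b s t hs ht hst
  cases b <;> simp only [sem, Bool.false_eq_true, if_true, if_false] at hs ht <;>
    rcases hE.be _ _ hst with ⟨h₁, h₂⟩ | ⟨h₁, h₂⟩ <;> contradiction

theorem compatibilityAt_sort (α : ℕ) : CompatibilityAt Ω E (Ty.sort α) := by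
  rintro a s t ⟨ha, hs⟩ ⟨-, ht⟩ hst
  exact ha.2.1 _ (hs ⟨_, Or.inl hst⟩) _ (ht ⟨_, Or.inr hst⟩) hst

theorem compatibilityAt_arr (hE : Evident Ω E) {μ ν : Ty} (hμ : CommonValueAt Ω E μ)
    (hν : CompatibilityAt Ω E ν) : CompatibilityAt Ω E (Ty.arr μ ν) := by
  intro f s t hs ht hst
  obtain ⟨z, hz⟩ := hE.fe _ _ hst
  rw [Ω.n2, Ω.n2] at hz
  obtain ⟨y, hy⟩ := hμ.exists_var z
  exact hν _ _ _ (hs _ y hy) (ht _ y hy) hz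

theorem commonValueAt_o (hE : Evident Ω E) : CommonValueAt Ω E Ty.o := by
  intro S hS
  by_cases hneg : ∃ s₀ ∈ S, Tm.Not (Ω.nf s₀) ∈ E
  · obtain ⟨s₀, hs₀, hneg₀⟩ := hneg
    refine ⟨false, fun s hs => ?_⟩
    simp only [sem, Bool.false_eq_true, if_false]
    exact fun hmem => (hS s hs s₀ hs₀).not_mem_neg_of_mem hE hmem hneg₀
  · push Not at hneg
    refine ⟨true, fun s hs => ?_⟩
    simpa only [sem, if_true] using hneg s hs

theorem commonValueAt_sort (hE : Evident Ω E) (α : ℕ) : CommonValueAt Ω E (Ty.sort α) := by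
  intro S hS
  obtain ⟨a, ha, hsub⟩ := exists_isDiscriminant_superset E α
    (a₀ := {u | Discriminating E u ∧ ∃ s ∈ S, Ω.nf s = u}) (fun u hu => hu.1)
    (by rintro _ ⟨-, s, hs, rfl⟩ _ ⟨-, t, ht, rfl⟩; exact (hS s hs t ht).diseq_not_mem hE)
  exact ⟨a, fun s hs => ⟨ha, fun hd => hsub ⟨hd, s, hs, rfl⟩⟩⟩

theorem commonValueAt_arr {μ ν : Ty} (hμ : CompatibilityAt Ω E μ) (hν : CommonValueAt Ω E ν) :
    CommonValueAt Ω E (Ty.arr μ ν) := by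
  intro S hS
  have happ : ∀ y : (sem Ω E μ).1, ∃ b : (sem Ω E ν).1,
      ∀ s ∈ S, ∀ t, (sem Ω E μ).2 t y → (sem Ω E ν).2 (Tm.app s t) b := by
    intro y
    obtain ⟨b, hb⟩ := hν {u | ∃ s ∈ S, ∃ t, (sem Ω E μ).2 t y ∧ Tm.app s t = u} (by
      rintro _ ⟨s, hs, t, ht, rfl⟩ _ ⟨s', hs', t', ht', rfl⟩
      exact .app (hS s hs s' hs') (hμ y t t' ht ht'))
    exact ⟨b, fun s hs t ht => hb _ ⟨s, hs, t, ht, rfl⟩⟩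
  choose f hf using happ
  exact ⟨fun y => f y.1, fun s hs t y hy => hf y s hs t hy⟩

theorem compatibilityAt_and_commonValueAt (hE : Evident Ω E) :
    ∀ σ : Ty, CompatibilityAt Ω E σ ∧ CommonValueAt Ω E σ
  | Ty.base 0 => ⟨compatibilityAt_o hE, commonValueAt_o hE⟩
  | Ty.base (α + 1) => ⟨compatibilityAt_sort α, commonValueAt_sort hE α⟩
  | Ty.arr μ ν =>
    have ihμ := compatibilityAt_and_commonValueAt hE μ
    have ihν := compatibilityAt_and_commonValueAt hE ν
    ⟨compatibilityAt_arr hE ihμ.2 ihν.1, commonValueAt_arr ihμ.1 ihν.2⟩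

end ValueSystem

theorem stmt9_general (Ω : NormOp) (E : Set (Tm Ty.o)) (hE : Evident Ω E) :
    (∀ (x : ℕ) (σ : Ty), ∃ a : (sem Ω E σ).1, (sem Ω E σ).2 (Tm.var x σ) a) ∧
    (∀ σ : Ty, ∃ a : (sem Ω E σ).1, ∃ t : Tm σ, (sem Ω E σ).2 t a) := by
  have hvar (x : ℕ) (σ : Ty) : ∃ a : (sem Ω E σ).1, (sem Ω E σ).2 (Tm.var x σ) a :=
    (compatibilityAt_and_commonValueAt hE σ).2.exists_var x
  exact ⟨hvar, fun σ => (hvar 0 σ).imp fun _ ha => ⟨_, ha⟩⟩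

/-- Admissibility: for every variable `x : σ` there is a possible value
`a ∈ D(σ)` with `x ≈ a`; in particular every `D(σ)` is nonempty. -/
theorem stmt9 (Ω : NormOp) (E : Set (Tm Ty.o)) (hE : Evident Ω E)
    (hnorm : ∀ s ∈ E, Ω.nf s = s) :
    (∀ (x : ℕ) (σ : Ty), ∃ a : (sem Ω E σ).1, (sem Ω E σ).2 (Tm.var x σ) a) ∧
    (∀ σ : Ty, ∃ a : (sem Ω E σ).1, ∃ t : Tm σ, (sem Ω E σ).2 t a) :=
  stmt9_general Ω E hE
end

section
/- Let E be an evident branch with its value system ≈. If s ≈_σ a, t ≈_σ b, and the equation s =_σ t is in E, then a = b. -/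
/-! Induction on the type. At `o`, BQ puts `s, t` either both in `E` or both negated in `E`,
which fixes both truth values alike. At a sort, Con makes `s` and `t` discriminating as soon as
`E` contains any disequation at that sort; then no disequation of `E` separates the union of the
two discriminants containing `s` and `t`, so by maximality both equal that union. Without such
disequations every discriminant is empty. At `σ → τ`, FQ turns `s = t` into `[s u] = [t u]`
for normal `u`, and the induction hypothesis at `τ` gives pointwise equality. -/

theorem Tm.eqn_injective {σ : Ty} {s t s' t' : Tm σ} (h : Tm.Eqn s t = Tm.Eqn s' t') :
    s = s' ∧ t = t' := by
  simpa only [Tm.Eqn, Tm.app.injEq, heq_eq_eq, true_and] using h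

theorem IsDiscriminant.eq_empty_of_forall_diseq_notMem {E : Set (Tm Ty.o)} {α : ℕ}
    {a : Set (Tm (Ty.sort α))} (ha : IsDiscriminant E α a)
    (hno : ∀ u v : Tm (Ty.sort α), Tm.Diseq u v ∉ E) : a = ∅ :=
  Set.eq_empty_of_forall_notMem fun w hw => by
    obtain ⟨z, hz | hz⟩ := ha.1 w hw
    exacts [hno w z hz, hno z w hz]

namespace NormOp

theorem nf_eqn (Ω : NormOp) {σ : Ty} (s t : Tm σ) : Ω.nf (Tm.Eqn s t) = Tm.Eqn (Ω.nf s) (Ω.nf t) :=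
  Ω.n3 (Tm.eq σ) (Atomic.eq σ) (Args.cons s (Args.cons t Args.nil))

variable {Ω : NormOp} {E : Set (Tm Ty.o)}

theorem nf_eq_self_of_eqn_mem (hnorm : ∀ s ∈ E, Ω.nf s = s) {σ : Ty} {s t : Tm σ}
    (hst : Tm.Eqn s t ∈ E) : Ω.nf s = s ∧ Ω.nf t = t :=
  Tm.eqn_injective ((Ω.nf_eqn s t).symm.trans (hnorm _ hst))

theorem sem_iff_of_nf_eq : ∀ {σ : Ty} {s s' : Tm σ}, Ω.nf s = Ω.nf s' →
    ∀ x : (sem Ω E σ).1, (sem Ω E σ).2 s x ↔ (sem Ω E σ).2 s' x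
  | Ty.base 0, _, _, h, _ => by simp only [sem, h]
  | Ty.base (_ + 1), _, _, h, _ => by simp only [sem, h]
  | Ty.arr _ _, s, s', h, _ => forall₃_congr fun u _ _ =>
      sem_iff_of_nf_eq (by rw [← Ω.n2 s u, ← Ω.n2 s' u, h]) _

theorem sem_nf_iff {σ : Ty} {s : Tm σ} {x : (sem Ω E σ).1} :
    (sem Ω E σ).2 (Ω.nf s) x ↔ (sem Ω E σ).2 s x :=
  sem_iff_of_nf_eq (Ω.n1 s) x

theorem sem_o_eq_true {s : Tm Ty.o} {a : Bool} (hs : (sem Ω E Ty.o).2 s a) (hn : Ω.nf s = s)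
    (h : s ∈ E) : a = true := by
  simp only [sem, hn] at hs
  cases a
  · exact absurd h hs
  · rfl

theorem sem_o_eq_false {s : Tm Ty.o} {a : Bool} (hs : (sem Ω E Ty.o).2 s a) (hn : Ω.nf s = s)
    (h : Tm.Not s ∈ E) : a = false := by
  simp only [sem, hn] at hs
  cases a
  · rfl
  · exact absurd h hs

theorem sem_sort_mem {α : ℕ} {s : Tm (Ty.sort α)} {a : Set (Tm (Ty.sort α))}
    (hs : (sem Ω E (Ty.sort α)).2 s a) (hn : Ω.nf s = s) (h : Discriminating E s) : s ∈ a := by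
  simp only [sem, hn] at hs
  exact hs.2 h

theorem sem_arr_app_nf {σ τ : Ty} {s : Tm (Ty.arr σ τ)} {f : (sem Ω E (Ty.arr σ τ)).1}
    (hs : (sem Ω E (Ty.arr σ τ)).2 s f) {u : Tm σ} {x : (sem Ω E σ).1}
    (hu : (sem Ω E σ).2 u x) : (sem Ω E τ).2 (Ω.nf (Tm.app s (Ω.nf u))) (f ⟨x, u, hu⟩) :=
  sem_nf_iff.2 (hs _ x (sem_nf_iff.2 hu))

end NormOp

section Evident

variable {Ω : NormOp} {E : Set (Tm Ty.o)}

theorem Evident.discriminating_of_eqn_mem (hE : Evident Ω E) {α : ℕ} {s t u v : Tm (Ty.sort α)}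
    (hst : Tm.Eqn s t ∈ E) (huv : Tm.Diseq u v ∈ E) :
    Discriminating E s ∧ Discriminating E t := by
  rcases hE.con s t u v hst huv with ⟨hs, ht⟩ | ⟨hs, ht⟩
  exacts [⟨⟨u, .inl hs⟩, ⟨u, .inl ht⟩⟩, ⟨⟨v, .inl hs⟩, ⟨v, .inl ht⟩⟩]

theorem Evident.isDiscriminant_eq_of_eqn_mem (hE : Evident Ω E) {α : ℕ} {s t : Tm (Ty.sort α)}
    {a b : Set (Tm (Ty.sort α))} (ha : IsDiscriminant E α a) (hb : IsDiscriminant E α b)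
    (hsa : s ∈ a) (htb : t ∈ b) (hst : Tm.Eqn s t ∈ E) : a = b := by
  obtain ⟨ha_disc, ha_sep, ha_max⟩ := ha
  obtain ⟨hb_disc, hb_sep, hb_max⟩ := hb
  have h_disc : ∀ u ∈ a ∪ b, Discriminating E u := by
    rintro u (hu | hu)
    exacts [ha_disc u hu, hb_disc u hu]
  have h_sep : ∀ u ∈ a ∪ b, ∀ v ∈ a ∪ b, Tm.Diseq u v ∉ E := by
    rintro u (hu | hu) v (hv | hv) huv
    · exact ha_sep u hu v hv huv
    · rcases hE.con s t u v hst huv with ⟨hsu, -⟩ | ⟨-, htv⟩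
      exacts [ha_sep s hsa u hu hsu, hb_sep t htb v hv htv]
    · rcases hE.con s t u v hst huv with ⟨-, htu⟩ | ⟨hsv, -⟩
      exacts [hb_sep t htb u hu htu, ha_sep s hsa v hv hsv]
    · exact hb_sep u hu v hv huv
  exact (ha_max _ Set.subset_union_left h_disc h_sep).symm.trans
    (hb_max _ Set.subset_union_right h_disc h_sep)

theorem Evident.sem_o_eq_of_eqn_mem (hE : Evident Ω E) {s t : Tm Ty.o} {a b : Bool}
    (hs : (sem Ω E Ty.o).2 s a) (ht : (sem Ω E Ty.o).2 t b) (hsn : Ω.nf s = s)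
    (htn : Ω.nf t = t) (hst : Tm.Eqn s t ∈ E) : a = b := by
  rcases hE.bq s t hst with ⟨hsE, htE⟩ | ⟨hsE, htE⟩
  · rw [NormOp.sem_o_eq_true hs hsn hsE, NormOp.sem_o_eq_true ht htn htE]
  · rw [NormOp.sem_o_eq_false hs hsn hsE, NormOp.sem_o_eq_false ht htn htE]

theorem Evident.sem_sort_eq_of_eqn_mem (hE : Evident Ω E) {α : ℕ} {s t : Tm (Ty.sort α)}
    {a b : Set (Tm (Ty.sort α))} (hs : (sem Ω E (Ty.sort α)).2 s a)
    (ht : (sem Ω E (Ty.sort α)).2 t b) (hsn : Ω.nf s = s) (htn : Ω.nf t = t)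
    (hst : Tm.Eqn s t ∈ E) : a = b := by
  by_cases hdiseq : ∃ u v : Tm (Ty.sort α), Tm.Diseq u v ∈ E
  · obtain ⟨u, v, huv⟩ := hdiseq
    obtain ⟨hs_disc, ht_disc⟩ := hE.discriminating_of_eqn_mem hst huv
    exact hE.isDiscriminant_eq_of_eqn_mem hs.1 ht.1 (NormOp.sem_sort_mem hs hsn hs_disc)
      (NormOp.sem_sort_mem ht htn ht_disc) hst
  · push Not at hdiseq
    rw [hs.1.eq_empty_of_forall_diseq_notMem hdiseq, ht.1.eq_empty_of_forall_diseq_notMem hdiseq]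

end Evident

/-- Functionality: if `s ≈_σ a`, `t ≈_σ b` and the equation `s = t` is in the
evident branch `E`, then `a = b`. -/
theorem stmt10 (Ω : NormOp) (E : Set (Tm Ty.o)) (hE : Evident Ω E)
    (hnorm : ∀ s ∈ E, Ω.nf s = s) (σ : Ty) (s t : Tm σ)
    (a b : (sem Ω E σ).1) (hs : (sem Ω E σ).2 s a) (ht : (sem Ω E σ).2 t b)
    (hst : Tm.Eqn s t ∈ E) : a = b := by
  induction σ with
  | base n =>
    obtain ⟨hsn, htn⟩ := NormOp.nf_eq_self_of_eqn_mem hnorm hst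
    cases n with
    | zero => exact hE.sem_o_eq_of_eqn_mem hs ht hsn htn hst
    | succ α => exact hE.sem_sort_eq_of_eqn_mem hs ht hsn htn hst
  | arr σ τ _ ihτ =>
    funext ⟨x, u, hu⟩
    exact ihτ _ _ _ _ (NormOp.sem_arr_app_nf hs hu) (NormOp.sem_arr_app_nf ht hu)
      (hE.fq s t hst _ (Ω.n1 u))
end
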